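/- arXiv:2409.05776 — 2 statements merged into one kernel-verified Lean document; each statement's English description precedes it below -/
import Mathlib

section
/- The functions u(z₁,z₂) = |z₁|² and v(z₁,z₂) = 1 − |z₂|² are both smooth solutions of the Levi equation ℒ(u) = ∑_{α,β=1}^{2} (δ_{αβ}|∂u|² − u_{z̄_α} u_{z_β}) u_{z_α z̄_β} = 0 on ℂ², they agree on the boundary of the unit ball 𝔹² = {|z₁|² + |z₂|² < 1}, but they are not equal on 𝔹²; hence the comparison (uniqueness) principle fails for the Levi equation. -/
open Complex

noncomputable section

/-- Wirtinger derivative ∂/∂z₁ of a complex-valued function on ℂ². -/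
def wdz1 (f : ℂ × ℂ → ℂ) (z : ℂ × ℂ) : ℂ :=
  (1 / 2) * (fderiv ℝ f z (1, 0) - Complex.I * fderiv ℝ f z (Complex.I, 0))

/-- Wirtinger derivative ∂/∂z̄₁. -/
def wdzbar1 (f : ℂ × ℂ → ℂ) (z : ℂ × ℂ) : ℂ :=
  (1 / 2) * (fderiv ℝ f z (1, 0) + Complex.I * fderiv ℝ f z (Complex.I, 0))

/-- Wirtinger derivative ∂/∂z₂. -/
def wdz2 (f : ℂ × ℂ → ℂ) (z : ℂ × ℂ) : ℂ :=
  (1 / 2) * (fderiv ℝ f z (0, 1) - Complex.I * fderiv ℝ f z (0, Complex.I))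

/-- Wirtinger derivative ∂/∂z̄₂. -/
def wdzbar2 (f : ℂ × ℂ → ℂ) (z : ℂ × ℂ) : ℂ :=
  (1 / 2) * (fderiv ℝ f z (0, 1) + Complex.I * fderiv ℝ f z (0, Complex.I))

/-- The Levi operator ℒ(u) = ∑_{α,β=1}^{2} (δ_{αβ}|∂u|² − u_{z̄_α} u_{z_β}) u_{z_α z̄_β}
for a real-valued function `u` on ℂ² (the value is real for C² functions; we take the
real part of the complex expression). -/
def LeviOp (u : ℂ × ℂ → ℝ) (z : ℂ × ℂ) : ℝ :=
  let uC : ℂ × ℂ → ℂ := fun w => (u w : ℂ)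
  let u1 := wdz1 uC
  let u2 := wdz2 uC
  let grad2 : ℂ := (‖u1 z‖ ^ 2 + ‖u2 z‖ ^ 2 : ℝ)
  (((grad2 - (starRingEnd ℂ) (u1 z) * u1 z) * wdzbar1 u1 z)
    + ((- (starRingEnd ℂ) (u1 z) * u2 z) * wdzbar1 u2 z)
    + ((- (starRingEnd ℂ) (u2 z) * u1 z) * wdzbar2 u1 z)
    + ((grad2 - (starRingEnd ℂ) (u2 z) * u2 z) * wdzbar2 u2 z)).re

/-- The unit ball 𝔹² in ℂ². -/
def unitBall2 : Set (ℂ × ℂ) := {z | normSq z.1 + normSq z.2 < 1}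

section aux

private lemma hasFDerivAt_mulconj1 (z : ℂ × ℂ) :
    HasFDerivAt (fun w : ℂ × ℂ => w.1 * (starRingEnd ℂ) w.1)
      (z.1 • ((Complex.conjCLE.toContinuousLinearMap).comp (ContinuousLinearMap.fst ℝ ℂ ℂ))
        + ((starRingEnd ℂ) z.1) • (ContinuousLinearMap.fst ℝ ℂ ℂ)) z := by
  have h1 : HasFDerivAt (fun w : ℂ × ℂ => w.1) (ContinuousLinearMap.fst ℝ ℂ ℂ) z :=
    hasFDerivAt_fst
  have h2 : HasFDerivAt (fun w : ℂ × ℂ => (starRingEnd ℂ) w.1)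
      ((Complex.conjCLE.toContinuousLinearMap).comp (ContinuousLinearMap.fst ℝ ℂ ℂ)) z :=
    (Complex.conjCLE.toContinuousLinearMap.hasFDerivAt).comp z h1
  exact h1.mul h2

private lemma hasFDerivAt_mulconj2 (z : ℂ × ℂ) :
    HasFDerivAt (fun w : ℂ × ℂ => w.2 * (starRingEnd ℂ) w.2)
      (z.2 • ((Complex.conjCLE.toContinuousLinearMap).comp (ContinuousLinearMap.snd ℝ ℂ ℂ))
        + ((starRingEnd ℂ) z.2) • (ContinuousLinearMap.snd ℝ ℂ ℂ)) z := by
  have h1 : HasFDerivAt (fun w : ℂ × ℂ => w.2) (ContinuousLinearMap.snd ℝ ℂ ℂ) z :=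
    hasFDerivAt_snd
  have h2 : HasFDerivAt (fun w : ℂ × ℂ => (starRingEnd ℂ) w.2)
      ((Complex.conjCLE.toContinuousLinearMap).comp (ContinuousLinearMap.snd ℝ ℂ ℂ)) z :=
    (Complex.conjCLE.toContinuousLinearMap.hasFDerivAt).comp z h1
  exact h1.mul h2

private lemma uC_eq : (fun w : ℂ × ℂ => ((normSq w.1 : ℝ) : ℂ)) =
    fun w : ℂ × ℂ => w.1 * (starRingEnd ℂ) w.1 := by
  funext w; rw [Complex.mul_conj]

private lemma fderiv_u (z v : ℂ × ℂ) :
    fderiv ℝ (fun w : ℂ × ℂ => ((normSq w.1 : ℝ) : ℂ)) z v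
      = z.1 * (starRingEnd ℂ) v.1 + (starRingEnd ℂ) z.1 * v.1 := by
  rw [uC_eq, (hasFDerivAt_mulconj1 z).fderiv]
  simp [smul_eq_mul]

private lemma vC_eq : (fun w : ℂ × ℂ => (((1 : ℝ) - normSq w.2 : ℝ) : ℂ)) =
    fun w : ℂ × ℂ => 1 - w.2 * (starRingEnd ℂ) w.2 := by
  funext w; rw [Complex.mul_conj]; push_cast; ring

private lemma fderiv_v (z v : ℂ × ℂ) :
    fderiv ℝ (fun w : ℂ × ℂ => (((1 : ℝ) - normSq w.2 : ℝ) : ℂ)) z v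
      = -(z.2 * (starRingEnd ℂ) v.2 + (starRingEnd ℂ) z.2 * v.2) := by
  rw [vC_eq]
  have h : HasFDerivAt (fun w : ℂ × ℂ => 1 - w.2 * (starRingEnd ℂ) w.2)
      (0 - (z.2 • ((Complex.conjCLE.toContinuousLinearMap).comp (ContinuousLinearMap.snd ℝ ℂ ℂ))
        + ((starRingEnd ℂ) z.2) • (ContinuousLinearMap.snd ℝ ℂ ℂ))) z :=
    (hasFDerivAt_const (1 : ℂ) z).sub (hasFDerivAt_mulconj2 z)
  rw [h.fderiv]
  simp [smul_eq_mul]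

private lemma wdz1_u : wdz1 (fun w : ℂ × ℂ => ((normSq w.1 : ℝ) : ℂ)) =
    fun z : ℂ × ℂ => (starRingEnd ℂ) z.1 := by
  funext z
  simp only [wdz1, fderiv_u]
  simp [Complex.conj_I]
  ring_nf
  try simp [Complex.I_sq]
  try ring

private lemma wdz2_u : wdz2 (fun w : ℂ × ℂ => ((normSq w.1 : ℝ) : ℂ)) =
    fun _ : ℂ × ℂ => (0 : ℂ) := by
  funext z
  simp only [wdz2, fderiv_u]
  simp

private lemma wdz1_v : wdz1 (fun w : ℂ × ℂ => (((1 : ℝ) - normSq w.2 : ℝ) : ℂ)) =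
    fun _ : ℂ × ℂ => (0 : ℂ) := by
  funext z
  simp only [wdz1, fderiv_v]
  simp

private lemma wdz2_v : wdz2 (fun w : ℂ × ℂ => (((1 : ℝ) - normSq w.2 : ℝ) : ℂ)) =
    fun z : ℂ × ℂ => -(starRingEnd ℂ) z.2 := by
  funext z
  simp only [wdz2, fderiv_v]
  simp [Complex.conj_I]
  ring_nf
  try simp [Complex.I_sq]
  try ring

private lemma fderiv_conj1 (z v : ℂ × ℂ) :
    fderiv ℝ (fun z : ℂ × ℂ => (starRingEnd ℂ) z.1) z v = (starRingEnd ℂ) v.1 := by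
  have h : HasFDerivAt (fun w : ℂ × ℂ => (starRingEnd ℂ) w.1)
      ((Complex.conjCLE.toContinuousLinearMap).comp (ContinuousLinearMap.fst ℝ ℂ ℂ)) z :=
    (Complex.conjCLE.toContinuousLinearMap.hasFDerivAt).comp z hasFDerivAt_fst
  rw [h.fderiv]; simp

private lemma fderiv_negconj2 (z v : ℂ × ℂ) :
    fderiv ℝ (fun z : ℂ × ℂ => -(starRingEnd ℂ) z.2) z v = -(starRingEnd ℂ) v.2 := by
  have h : HasFDerivAt (fun w : ℂ × ℂ => -(starRingEnd ℂ) w.2)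
      (-((Complex.conjCLE.toContinuousLinearMap).comp (ContinuousLinearMap.snd ℝ ℂ ℂ))) z :=
    ((Complex.conjCLE.toContinuousLinearMap.hasFDerivAt).comp z hasFDerivAt_snd).neg
  rw [h.fderiv]; simp

private lemma wdzbar1_conj1 :
    wdzbar1 (fun z : ℂ × ℂ => (starRingEnd ℂ) z.1) = fun _ : ℂ × ℂ => (1 : ℂ) := by
  funext z
  simp only [wdzbar1, fderiv_conj1]
  simp [Complex.conj_I]
  ring_nf
  try simp [Complex.I_sq]
  try ring

private lemma wdzbar2_conj1 :
    wdzbar2 (fun z : ℂ × ℂ => (starRingEnd ℂ) z.1) = fun _ : ℂ × ℂ => (0 : ℂ) := by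
  funext z
  simp only [wdzbar2, fderiv_conj1]
  simp

private lemma wdzbar1_negconj2 :
    wdzbar1 (fun z : ℂ × ℂ => -(starRingEnd ℂ) z.2) = fun _ : ℂ × ℂ => (0 : ℂ) := by
  funext z
  simp only [wdzbar1, fderiv_negconj2]
  simp

private lemma wdzbar2_negconj2 :
    wdzbar2 (fun z : ℂ × ℂ => -(starRingEnd ℂ) z.2) = fun _ : ℂ × ℂ => (-1 : ℂ) := by
  funext z
  simp only [wdzbar2, fderiv_negconj2]
  simp [Complex.conj_I]
  ring_nf
  try simp [Complex.I_sq]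
  try ring

private lemma wdzbar1_zero :
    wdzbar1 (fun _ : ℂ × ℂ => (0 : ℂ)) = fun _ : ℂ × ℂ => (0 : ℂ) := by
  funext z; simp [wdzbar1, fderiv_const]

private lemma wdzbar2_zero :
    wdzbar2 (fun _ : ℂ × ℂ => (0 : ℂ)) = fun _ : ℂ × ℂ => (0 : ℂ) := by
  funext z; simp [wdzbar2, fderiv_const]

private lemma contDiff_normSq : ContDiff ℝ (⊤ : ℕ∞) (fun z : ℂ => normSq z) := by
  have : (fun z : ℂ => normSq z) = fun z : ℂ => z.re * z.re + z.im * z.im := by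
    funext z; exact normSq_apply z
  rw [this]
  exact ((Complex.reCLM.contDiff.mul Complex.reCLM.contDiff).add
    (Complex.imCLM.contDiff.mul Complex.imCLM.contDiff))

end aux
private lemma levi_u (z : ℂ × ℂ) : LeviOp (fun z : ℂ × ℂ => normSq z.1) z = 0 := by
  simp only [LeviOp, wdz1_u, wdz2_u, wdzbar1_conj1, wdzbar2_conj1, wdzbar1_zero, wdzbar2_zero]
  simp [Complex.mul_conj, Complex.normSq_eq_norm_sq, ← Complex.ofReal_pow]

private lemma levi_v (z : ℂ × ℂ) : LeviOp (fun z : ℂ × ℂ => 1 - normSq z.2) z = 0 := by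
  simp only [LeviOp, wdz1_v, wdz2_v, wdzbar1_negconj2, wdzbar2_negconj2, wdzbar1_zero,
    wdzbar2_zero]
  simp [Complex.mul_conj, Complex.normSq_eq_norm_sq, ← Complex.ofReal_pow]

/-- `u(z) = |z₁|²` and `v(z) = 1 − |z₂|²` are smooth solutions of the Levi
equation on ℂ², agree on the boundary of the unit ball, but differ inside: the
comparison (uniqueness) principle fails for the Levi equation. -/
theorem levi_comparison_fails :
    let u : ℂ × ℂ → ℝ := fun z => normSq z.1
    let v : ℂ × ℂ → ℝ := fun z => 1 - normSq z.2
    ContDiff ℝ (⊤ : ℕ∞) u ∧ ContDiff ℝ (⊤ : ℕ∞) v ∧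
    (∀ z : ℂ × ℂ, LeviOp u z = 0) ∧ (∀ z : ℂ × ℂ, LeviOp v z = 0) ∧
    (∀ z : ℂ × ℂ, normSq z.1 + normSq z.2 = 1 → u z = v z) ∧
    (∃ z ∈ unitBall2, u z ≠ v z) := by
  intro u v
  refine ⟨?_, ?_, ?_, ?_, ?_, ?_⟩
  · exact contDiff_normSq.comp contDiff_fst
  · exact contDiff_const.sub (contDiff_normSq.comp contDiff_snd)
  · exact levi_u
  · exact levi_v
  · intro z h
    show normSq z.1 = 1 - normSq z.2
    linarith
  · refine ⟨(0, 0), ?_, ?_⟩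
    · simp [unitBall2]
    · show normSq 0 ≠ 1 - normSq 0
      simp

end
end

section
/- There exists a C¹ function ψ : ℝ⁺ → ℝ⁺ with the following properties, given δ > 0, constants a, ε > 0 with a < ε, a strictly decreasing positive sequence (aₙ) with aₙ → 0 and aₙ < a, and a sequence of positive numbers (εₙ): ψ < δ everywhere, ψ(x) is constant for x > a, ψ(x) → 0 as x → 0⁺, and ψ(x) < εₙ for all x ∈ [a_{n+1}, aₙ] and every n. -/
open Set Filter

/-- The decreasing sequence of values used to build the damping function. -/
noncomputable def dampW (δ : ℝ) (eps aseq : ℕ → ℝ) : ℕ → ℝ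
  | 0 => (1 / 2) * min δ (min (eps 0) (aseq 0))
  | n + 1 => min (dampW δ eps aseq n) ((1 / 2) * min (eps (n + 1)) (aseq (n + 1)))

/-- Smooth step from 0 (at `aseq (n+1)`) to 1 (at `aseq n`). -/
noncomputable def dampS (aseq : ℕ → ℝ) (n : ℕ) (x : ℝ) : ℝ :=
  Real.smoothTransition ((x - aseq (n + 1)) / (aseq n - aseq (n + 1)))

/-- existence of a C¹ function ψ : ℝ⁺ → ℝ⁺ which is < δ, eventually
constant (for x > a), tends to 0 at 0⁺, and satisfies ψ < εₙ on each interval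
[a_{n+1}, aₙ]. -/
theorem exists_damping_function (δ a ε : ℝ) (hδ : 0 < δ) (ha : 0 < a) (hε : a < ε)
    (aseq : ℕ → ℝ) (haseq : StrictAnti aseq) (hapos : ∀ n, 0 < aseq n)
    (halim : Filter.Tendsto aseq Filter.atTop (nhds 0)) (halt : ∀ n, aseq n < a)
    (eps : ℕ → ℝ) (heps : ∀ n, 0 < eps n) :
    ∃ ψ : ℝ → ℝ, ContDiffOn ℝ 1 ψ (Ioi 0) ∧
      (∀ x ∈ Ioi (0 : ℝ), 0 < ψ x ∧ ψ x < δ) ∧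
      (∃ c : ℝ, ∀ x ∈ Ioi a, ψ x = c) ∧
      Filter.Tendsto ψ (nhdsWithin 0 (Ioi 0)) (nhds 0) ∧
      (∀ n, ∀ x ∈ Icc (aseq (n + 1)) (aseq n), ψ x < eps n) := by
  set w : ℕ → ℝ := dampW δ eps aseq with hw_def
  set S : ℕ → ℝ → ℝ := dampS aseq with hS_def
  set c : ℕ → ℝ := fun n => w n - w (n + 1) with hc_def
  set ψ : ℝ → ℝ := fun x => ∑' n, c n * S n x with hψ_def
  -- basic facts about w
  have hw0 : w 0 = (1 / 2) * min δ (min (eps 0) (aseq 0)) := rfl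
  have hwsucc : ∀ n, w (n + 1) = min (w n) ((1 / 2) * min (eps (n + 1)) (aseq (n + 1))) :=
    fun n => rfl
  have hw_pos : ∀ n, 0 < w n := by
    intro n
    induction n with
    | zero =>
      rw [hw0]
      have := heps 0; have := hapos 0
      positivity
    | succ n ih =>
      rw [hwsucc]
      have := heps (n + 1); have := hapos (n + 1)
      positivity
  have hw_step : ∀ n, w (n + 1) ≤ w n := fun n => by rw [hwsucc]; exact min_le_left _ _
  have hw_anti : Antitone w := antitone_nat_of_succ_le hw_step
  have hw_le_aseq : ∀ n, w n ≤ aseq n / 2 := by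
    intro n
    cases n with
    | zero =>
      rw [hw0]
      have h1 : min δ (min (eps 0) (aseq 0)) ≤ aseq 0 :=
        le_trans (min_le_right _ _) (min_le_right _ _)
      linarith
    | succ n =>
      rw [hwsucc]
      have h1 : min (eps (n + 1)) (aseq (n + 1)) ≤ aseq (n + 1) := min_le_right _ _
      have := min_le_right (w n) ((1 / 2) * min (eps (n + 1)) (aseq (n + 1)))
      linarith
  have hw_lt_eps : ∀ n, w n < eps n := by
    intro n
    cases n with
    | zero =>
      rw [hw0]
      have h1 : min δ (min (eps 0) (aseq 0)) ≤ eps 0 :=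
        le_trans (min_le_right _ _) (min_le_left _ _)
      have := heps 0
      linarith
    | succ n =>
      rw [hwsucc]
      have h1 : min (eps (n + 1)) (aseq (n + 1)) ≤ eps (n + 1) := min_le_left _ _
      have h2 := min_le_right (w n) ((1 / 2) * min (eps (n + 1)) (aseq (n + 1)))
      have := heps (n + 1)
      linarith
  have hw0_lt_δ : w 0 < δ := by
    rw [hw0]
    have h1 : min δ (min (eps 0) (aseq 0)) ≤ δ := min_le_left _ _
    linarith
  have hw_lim : Tendsto w atTop (nhds 0) := by
    have h2 : Tendsto (fun n => aseq n / 2) atTop (nhds 0) := by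
      simpa using halim.div_const 2
    exact squeeze_zero (fun n => (hw_pos n).le) hw_le_aseq h2
  -- basic facts about S
  have hd : ∀ n, 0 < aseq n - aseq (n + 1) := fun n => sub_pos.2 (haseq (Nat.lt_succ_self n))
  have hS_nonneg : ∀ n x, 0 ≤ S n x := fun n x => Real.smoothTransition.nonneg _
  have hS_le_one : ∀ n x, S n x ≤ 1 := fun n x => Real.smoothTransition.le_one _
  have hS1 : ∀ n x, aseq n ≤ x → S n x = 1 := by
    intro n x hx
    apply Real.smoothTransition.one_of_one_le
    rw [le_div_iff₀ (hd n)]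
    linarith
  have hS0 : ∀ n x, x ≤ aseq (n + 1) → S n x = 0 := by
    intro n x hx
    apply Real.smoothTransition.zero_of_nonpos
    apply div_nonpos_of_nonpos_of_nonneg (by linarith) (hd n).le
  have hS_smooth : ∀ n, ContDiff ℝ 1 (S n) := by
    intro n
    exact Real.smoothTransition.contDiff.comp
      ((contDiff_id.sub contDiff_const).div_const _)
  -- summability
  have hc_nonneg : ∀ n, 0 ≤ c n := fun n => sub_nonneg.2 (hw_step n)
  have hpartial : ∀ n, ∑ i ∈ Finset.range n, c i = w 0 - w n := fun n =>
    Finset.sum_range_sub' w n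
  have hc_sum : Summable c :=
    summable_of_sum_range_le (c := w 0) hc_nonneg
      (fun n => by rw [hpartial]; have := hw_pos n; linarith)
  have hterm_nonneg : ∀ x n, 0 ≤ c n * S n x := fun x n =>
    mul_nonneg (hc_nonneg n) (hS_nonneg n x)
  have hterm_le : ∀ x n, c n * S n x ≤ c n := fun x n =>
    mul_le_of_le_one_right (hc_nonneg n) (hS_le_one n x)
  have hterm_sum : ∀ x, Summable (fun n => c n * S n x) := fun x =>
    hc_sum.of_nonneg_of_le (hterm_nonneg x) (hterm_le x)
  -- tail sums
  have htail : ∀ k, ∑' i, c (i + k) = w k := by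
    intro k
    have hsumm : Summable (fun i => c (i + k)) := (summable_nat_add_iff k).2 hc_sum
    have hps : ∀ n, ∑ i ∈ Finset.range n, c (i + k) = w k - w (n + k) := by
      intro n
      have := Finset.sum_range_sub' (fun i => w (i + k)) n
      simpa [hc_def, Nat.succ_add, Nat.add_right_comm] using this
    have htend : Tendsto (fun n : ℕ => ∑ i ∈ Finset.range n, c (i + k)) atTop
        (nhds (w k)) := by
      have h1 : Tendsto (fun n : ℕ => w (n + k)) atTop (nhds 0) :=
        hw_lim.comp (tendsto_add_atTop_nat k)
      have h2 : Tendsto (fun n : ℕ => w k - w (n + k)) atTop (nhds (w k - 0)) :=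
        tendsto_const_nhds.sub h1
      simp only [sub_zero] at h2
      simpa only [hps] using h2
    exact ((hsumm.hasSum_iff_tendsto_nat).2 htend).tsum_eq
  -- master formula
  have hM : ∀ k x, aseq (k + 1) < x →
      ψ x = w (k + 1) + ∑ i ∈ Finset.range (k + 1), c i * S i x := by
    intro k x hx
    have hsplit := Summable.sum_add_tsum_nat_add (k + 1) (hterm_sum x)
    have htail1 : ∀ i : ℕ, c (i + (k + 1)) * S (i + (k + 1)) x = c (i + (k + 1)) := by
      intro i
      have h1 : aseq (i + (k + 1)) ≤ aseq (k + 1) := haseq.antitone (Nat.le_add_left _ _)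
      rw [hS1 (i + (k + 1)) x (h1.trans hx.le), mul_one]
    have htail2 : ∑' i, c (i + (k + 1)) * S (i + (k + 1)) x = w (k + 1) := by
      rw [tsum_congr htail1, htail (k + 1)]
    calc ψ x = (∑ i ∈ Finset.range (k + 1), c i * S i x) +
        ∑' i, c (i + (k + 1)) * S (i + (k + 1)) x := hsplit.symm
      _ = w (k + 1) + ∑ i ∈ Finset.range (k + 1), c i * S i x := by
          rw [htail2, add_comm]
  -- existence of a level
  have hex : ∀ x : ℝ, 0 < x → ∃ k, aseq (k + 1) < x := by
    intro x hx
    obtain ⟨N, hN⟩ := (halim.eventually (Iio_mem_nhds hx)).exists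
    exact ⟨N, lt_of_le_of_lt (haseq.antitone (Nat.le_succ N)) hN⟩
  -- lower bound
  have hlb : ∀ k x, aseq (k + 1) < x → w (k + 1) ≤ ψ x := by
    intro k x hx
    rw [hM k x hx]
    have : 0 ≤ ∑ i ∈ Finset.range (k + 1), c i * S i x :=
      Finset.sum_nonneg fun i _ => hterm_nonneg x i
    linarith
  -- general upper bound
  have hub0 : ∀ k x, aseq (k + 1) < x → ψ x ≤ w 0 := by
    intro k x hx
    rw [hM k x hx]
    have h1 : ∑ i ∈ Finset.range (k + 1), c i * S i x ≤ ∑ i ∈ Finset.range (k + 1), c i :=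
      Finset.sum_le_sum fun i _ => hterm_le x i
    rw [hpartial (k + 1)] at h1
    linarith
  -- refined upper bound
  have hub : ∀ k n x, n ≤ k + 1 → aseq (k + 1) < x → x ≤ aseq n → ψ x ≤ w n := by
    intro k n x hn hx1 hx2
    rw [hM k x hx1]
    have hzero : ∀ i ∈ Finset.range (k + 1), i ∉ Finset.Ico n (k + 1) →
        c i * S i x = 0 := by
      intro i hi hni
      simp only [Finset.mem_range] at hi
      simp only [Finset.mem_Ico, not_and, not_lt] at hni
      have hin : i < n := by
        by_contra h
        exact absurd (hni (le_of_not_gt h)) (not_le.2 hi)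
      have h1 : aseq n ≤ aseq (i + 1) := haseq.antitone hin
      rw [hS0 i x (hx2.trans h1), mul_zero]
    have hsub : Finset.Ico n (k + 1) ⊆ Finset.range (k + 1) := by
      intro i hi
      simp only [Finset.mem_Ico] at hi
      simp [hi.2]
    have heq : ∑ i ∈ Finset.range (k + 1), c i * S i x =
        ∑ i ∈ Finset.Ico n (k + 1), c i * S i x :=
      (Finset.sum_subset hsub hzero).symm
    have h1 : ∑ i ∈ Finset.Ico n (k + 1), c i * S i x ≤ ∑ i ∈ Finset.Ico n (k + 1), c i :=
      Finset.sum_le_sum fun i _ => hterm_le x i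
    have h2 : ∑ i ∈ Finset.Ico n (k + 1), c i = w n - w (k + 1) := by
      rw [Finset.sum_Ico_eq_sub _ hn, hpartial, hpartial]
      ring
    rw [heq]
    linarith
  refine ⟨ψ, ?_, ?_, ⟨w 0, ?_⟩, ?_, ?_⟩
  · -- ContDiffOn
    intro x hx
    obtain ⟨k, hk⟩ := hex x hx
    apply ContDiffAt.contDiffWithinAt
    have hF : ContDiff ℝ 1 (fun t => w (k + 1) + ∑ i ∈ Finset.range (k + 1), c i * S i t) :=
      contDiff_const.add (ContDiff.sum fun i _ => contDiff_const.mul (hS_smooth i))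
    exact hF.contDiffAt.congr_of_eventuallyEq
      (Filter.eventuallyEq_of_mem (Ioi_mem_nhds hk) (fun t ht => hM k t ht))
  · -- positivity and < δ
    intro x hx
    obtain ⟨k, hk⟩ := hex x hx
    exact ⟨lt_of_lt_of_le (hw_pos (k + 1)) (hlb k x hk),
      lt_of_le_of_lt (hub0 k x hk) hw0_lt_δ⟩
  · -- constant on Ioi a
    intro x hx
    have hx0 : aseq 1 < x := lt_trans (lt_trans (haseq Nat.zero_lt_one) (halt 0)) hx
    rw [hM 0 x hx0]
    rw [Finset.sum_range_one, hS1 0 x (le_of_lt (lt_trans (halt 0) hx)), mul_one]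
    simp [hc_def]
  · -- tendsto 0 at 0⁺
    rw [Metric.tendsto_nhdsWithin_nhds]
    intro e he
    obtain ⟨M, hM'⟩ := (hw_lim.eventually (Iio_mem_nhds he)).exists
    refine ⟨aseq M, hapos M, ?_⟩
    intro x hx hdist
    rw [Real.dist_eq, sub_zero] at hdist
    have hx0 : (0 : ℝ) < x := hx
    have hxM : x < aseq M := lt_of_le_of_lt (le_abs_self x) hdist
    obtain ⟨k, hk⟩ := hex x hx0
    set K := max k M with hK
    have hk1 : aseq (K + 1) < x :=
      lt_of_le_of_lt (haseq.antitone (by omega : k + 1 ≤ K + 1)) hk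
    have hMK : M ≤ K + 1 := le_trans (le_max_right k M) (Nat.le_succ K)
    have hψub : ψ x ≤ w M := hub K M x hMK hk1 hxM.le
    have hψpos : 0 < ψ x := lt_of_lt_of_le (hw_pos (K + 1)) (hlb K x hk1)
    rw [Real.dist_eq, sub_zero, abs_of_pos hψpos]
    exact lt_of_le_of_lt hψub hM'
  · -- interval bounds
    intro n x hx
    obtain ⟨hx1, hx2⟩ := hx
    have h1 : aseq (n + 1 + 1) < x :=
      lt_of_lt_of_le (haseq (Nat.lt_succ_self (n + 1))) hx1
    exact lt_of_le_of_lt (hub (n + 1) n x (by omega) h1 hx2) (hw_lt_eps n)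
end
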